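/- Let P be a joint distribution over (Y, Z) given X = x with all probabilities positive, and define the realized per-token reward r_t(y_t) = log P(z | x, y_{≤t}) − log P(z | x, y_{<t}). Then for each fixed t and prefix y_{<t}, E_{Y_t ∼ P(·|x,y_{<t})}[ E_{Z∼P(·|x,y_{<t},Y_t)}[ r_t(Y_t) ] ] = I(Y_t; Z | X=x, Y_{<t}=y_{<t}) ≥ 0, while for each fixed z, E_{Y_t ∼ P(·|x,y_{<t})}[r_t(Y_t)] = −KL(P(Y_t|x,y_{<t}) ‖ P(Y_t|x,y_{<t},z)) ≤ 0. -/

import Mathlib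

open Finset Real InformationTheory

/-!
Both claims are instances of Gibbs' inequality `0 ≤ ∑ p log (p / q)` for `∑ q ≤ ∑ p`, which holds
termwise since `q * klFun (p / q) ≥ 0`. Averaged jointly, the reward is the divergence of `P` from
the product of its marginals; for a fixed `z` it is minus the divergence of the prior marginal of
`Y_t` from the posterior `P(· | z)`, whose mass is `1` as well.
-/

lemma sub_le_mul_log_div {p q : ℝ} (hp : 0 ≤ p) (hq : 0 < q) : p - q ≤ p * log (p / q) := by
  have hkl := mul_nonneg hq.le (klFun_nonneg (div_nonneg hp hq.le))
  have hpq : q * (p / q) = p := mul_div_cancel₀ p hq.ne'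
  rw [klFun_apply] at hkl
  linear_combination hkl + (log (p / q) - 1) * hpq

lemma sum_mul_log_div_nonneg {ι : Type*} {s : Finset ι} {p q : ι → ℝ}
    (hp : ∀ i ∈ s, 0 ≤ p i) (hq : ∀ i ∈ s, 0 < q i) (hsum : ∑ i ∈ s, q i ≤ ∑ i ∈ s, p i) :
    0 ≤ ∑ i ∈ s, p i * log (p i / q i) :=
  calc 0 ≤ ∑ i ∈ s, (p i - q i) := by rw [sum_sub_distrib]; linarith
    _ ≤ ∑ i ∈ s, p i * log (p i / q i) :=
      sum_le_sum fun i hi => sub_le_mul_log_div (hp i hi) (hq i hi)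

lemma log_div_div_eq_neg_log_div (x y w : ℝ) : log (x / y / w) = -log (y / (x / w)) := by
  rw [← log_inv, inv_div, div_div, div_div, mul_comm]

section JointDistribution

variable {A Z : Type*} [Fintype A] [Fintype Z] {P : A → Z → ℝ}

lemma sum_marginal_mul_marginal (hsum : ∑ a, ∑ z, P a z = 1) :
    ∑ a, ∑ z, (∑ z', P a z') * ∑ a', P a' z = 1 := by
  simp_rw [← mul_sum, ← sum_mul, hsum, one_mul]
  rwa [sum_comm]

theorem mutualInfo_nonneg (hP : ∀ a z, 0 < P a z) (hsum : ∑ a, ∑ z, P a z = 1) :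
    0 ≤ ∑ a, ∑ z, P a z * log (P a z / ((∑ z', P a z') * ∑ a', P a' z)) := by
  have hmarg (a : A) (z : Z) : 0 < (∑ z', P a z') * ∑ a', P a' z :=
    mul_pos (sum_pos (fun z' _ => hP a z') ⟨z, mem_univ z⟩)
      (sum_pos (fun a' _ => hP a' z) ⟨a, mem_univ a⟩)
  have hgibbs := sum_mul_log_div_nonneg (s := univ ×ˢ univ) (p := fun x => P x.1 x.2)
    (q := fun x => (∑ z', P x.1 z') * ∑ a', P a' x.2) (fun x _ => (hP _ _).le)
    (fun x _ => hmarg _ _)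
    (by simp only [sum_product, sum_marginal_mul_marginal hsum, hsum, le_refl])
  simpa only [sum_product] using hgibbs

theorem klDiv_prior_posterior_nonneg (hP : ∀ a z, 0 < P a z) (hsum : ∑ a, ∑ z, P a z = 1)
    (z : Z) : 0 ≤ ∑ a, (∑ z', P a z') * log ((∑ z', P a z') / (P a z / ∑ a', P a' z)) := by
  refine sum_mul_log_div_nonneg (fun a _ => sum_nonneg fun z' _ => (hP a z').le)
    (fun a _ => div_pos (hP a z) (sum_pos (fun a' _ => hP a' z) ⟨a, mem_univ a⟩)) ?_
  rw [← sum_div, hsum]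
  exact div_self_le_one _

end JointDistribution

/-- The prefix `(x, y_{<t})` is fixed and suppressed: `P a z` is the joint law of `(Y_t, Z)` given
it, and the reward of `a` under feedback `z` is `log (P(z | a) / P(z))`. -/
theorem stmt18 {A Zt : Type*} [Fintype A] [Fintype Zt]
    (P : A → Zt → ℝ) (hpos : ∀ a z, 0 < P a z) (hsum : ∑ a, ∑ z, P a z = 1) :
    (∑ a, ∑ z, P a z * Real.log ((P a z / ∑ z', P a z') / (∑ a', P a' z))
      = ∑ a, ∑ z, P a z * Real.log (P a z / ((∑ z', P a z') * (∑ a', P a' z)))) ∧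
    (0 ≤ ∑ a, ∑ z, P a z * Real.log (P a z / ((∑ z', P a z') * (∑ a', P a' z)))) ∧
    (∀ z : Zt,
      (∑ a, (∑ z', P a z') * Real.log ((P a z / ∑ z', P a z') / (∑ a', P a' z))
        = -∑ a, (∑ z', P a z') *
            Real.log ((∑ z', P a z') / (P a z / (∑ a', P a' z)))) ∧
      (∑ a, (∑ z', P a z') * Real.log ((P a z / ∑ z', P a z') / (∑ a', P a' z))
        ≤ 0)) := by
  refine ⟨by simp only [div_div], mutualInfo_nonneg hpos hsum, fun z => ?_⟩
  have hreward : ∑ a, (∑ z', P a z') * log ((P a z / ∑ z', P a z') / ∑ a', P a' z)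
      = -∑ a, (∑ z', P a z') * log ((∑ z', P a z') / (P a z / ∑ a', P a' z)) := by
    simp only [log_div_div_eq_neg_log_div, mul_neg, sum_neg_distrib]
  exact ⟨hreward, hreward ▸ neg_nonpos.mpr (klDiv_prior_posterior_nonneg hpos hsum z)⟩
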